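/- Let m ≥ 2 be an integer, let W_m = {w^i = (sin(2πi/m), cos(2πi/m)) : i ∈ [m]}, let α = 2/m², let φ_α(a) = 0 for a ≤ 1 - α and φ_α(a) = (a - 1 + α)/α for a > 1 - α, and for V ⊆ W_m define f_V(x) = Σ_{w ∈ V} φ_α(⟨w, x⟩). Then f_V is convex on ℝ², and for every x in the closed unit disk B₂² we have 0 ≤ f_V(x) ≤ 1; moreover for every w ∈ W_m, f_V(w) = 1 if w ∈ V and f_V(w) = 0 if w ∉ V. -/

import Mathlib

open scoped RealInnerProductSpace Real BigOperators
attribute [local instance] Classical.propDecidable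

/-- The point `w^i = (sin(2πi/m), cos(2πi/m))` on the unit circle in `ℝ²`. -/
noncomputable def circlePoint (m i : ℕ) : EuclideanSpace ℝ (Fin 2) :=
  WithLp.toLp 2 ![Real.sin (2 * π * i / m), Real.cos (2 * π * i / m)]

/-- The set `W_m = {w^1, ..., w^m}`. -/
noncomputable def Wm (m : ℕ) : Finset (EuclideanSpace ℝ (Fin 2)) :=
  (Finset.Icc 1 m).image (circlePoint m)

/-- `φ_α(a) = 0` for `a ≤ 1 - α`, and `φ_α(a) = (a - 1 + α)/α` for `a > 1 - α`. -/
noncomputable def phi (a' a : ℝ) : ℝ := if a ≤ 1 - a' then 0 else (a - 1 + a') / a'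

/-- `f_V(x) = Σ_{w ∈ V} φ_α(⟨w, x⟩)` with `α = 2/m²`. -/
noncomputable def fV (m : ℕ) (V : Finset (EuclideanSpace ℝ (Fin 2)))
    (x : EuclideanSpace ℝ (Fin 2)) : ℝ :=
  ∑ w ∈ V, phi (2 / (m : ℝ) ^ 2) ⟪w, x⟫

lemma inner_circlePoint (m i j : ℕ) :
    ⟪circlePoint m i, circlePoint m j⟫ = Real.cos (2*π*i/m - 2*π*j/m) := by
  simp [circlePoint, PiLp.inner_apply, Fin.sum_univ_two, Real.cos_sub]
  ring

lemma norm_circlePoint (m i : ℕ) : ‖circlePoint m i‖ = 1 := by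
  have h : ⟪circlePoint m i, circlePoint m i⟫ = 1 := by
    rw [inner_circlePoint]; simp
  rw [real_inner_self_eq_norm_sq] at h
  have h2 : (‖circlePoint m i‖ - 1) * (‖circlePoint m i‖ + 1) = 0 := by nlinarith
  rcases mul_eq_zero.1 h2 with h3 | h3
  · linarith
  · have := norm_nonneg (circlePoint m i); linarith

lemma norm_Wm {m : ℕ} {w : EuclideanSpace ℝ (Fin 2)} (hw : w ∈ Wm m) : ‖w‖ = 1 := by
  obtain ⟨i, -, rfl⟩ := Finset.mem_image.1 hw
  exact norm_circlePoint m i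

lemma cos_pi_div_le (m : ℕ) (hm : 2 ≤ m) : Real.cos (π / m) ≤ 1 - 2 / (m : ℝ) ^ 2 := by
  have hm' : (2:ℝ) ≤ m := by exact_mod_cast hm
  have hm0 : (0:ℝ) < m := by linarith
  have habs : |π / m| ≤ π := by
    rw [abs_of_pos (by positivity)]
    rw [div_le_iff₀ hm0]
    nlinarith [Real.pi_pos]
  have := Real.cos_le_one_sub_mul_cos_sq habs
  have hpi : (0:ℝ) < π := Real.pi_pos
  have heq : 2 / π ^ 2 * (π / m) ^ 2 = 2 / (m:ℝ)^2 := by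
    field_simp
  linarith [heq ▸ this]

lemma cos_angle_le (m : ℕ) (hm : 2 ≤ m) (t : ℝ) (h1 : 1 ≤ t) (h2 : t ≤ (m:ℝ) - 1) :
    Real.cos (2 * π * t / m) ≤ 2 * (1 - 2 / (m:ℝ)^2)^2 - 1 := by
  have hm' : (2:ℝ) ≤ m := by exact_mod_cast hm
  have hm0 : (0:ℝ) < m := by linarith
  have hpi : (0:ℝ) < π := Real.pi_pos
  have heq : 2 * π * t / m = 2 * (π * t / m) := by ring
  rw [heq, Real.cos_two_mul]
  have hcancel : π / m * m = π := div_mul_cancel₀ π hm0.ne'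
  have hlow : π / m ≤ π * t / m := by
    rw [div_le_div_iff₀ hm0 hm0]
    nlinarith [mul_pos hpi hm0]
  have hhigh : π * t / m ≤ π - π / m := by
    rw [div_le_iff₀ hm0]
    nlinarith
  have hq : π * t / m ≤ π := by nlinarith [div_pos hpi hm0]
  have hc1 : Real.cos (π * t / m) ≤ Real.cos (π / m) :=
    Real.cos_le_cos_of_nonneg_of_le_pi (by positivity) hq hlow
  have hc2 : - Real.cos (π / m) ≤ Real.cos (π * t / m) := by
    have h3 : Real.cos (π - π / m) ≤ Real.cos (π * t / m) :=
      Real.cos_le_cos_of_nonneg_of_le_pi (by positivity) (by linarith [div_pos hpi hm0]) hhigh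
    rwa [Real.cos_pi_sub] at h3
  have hcp : 0 ≤ Real.cos (π / m) := by
    apply Real.cos_nonneg_of_mem_Icc
    constructor
    · nlinarith [div_pos hpi hm0]
    · rw [div_le_div_iff₀ hm0 (by norm_num : (0:ℝ) < 2)]; nlinarith
  have hb := cos_pi_div_le m hm
  have hx : (0:ℝ) < 2 / (m:ℝ)^2 := by positivity
  have hx2 : 2 / (m:ℝ)^2 ≤ 1/2 := by
    rw [div_le_div_iff₀ (by positivity) (by norm_num)]
    nlinarith
  nlinarith [sq_nonneg (Real.cos (π * t / m))]

lemma inner_Wm_le {m : ℕ} (hm : 2 ≤ m) {w w' : EuclideanSpace ℝ (Fin 2)}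
    (hw : w ∈ Wm m) (hw' : w' ∈ Wm m) (hne : w ≠ w') :
    ⟪w, w'⟫ ≤ 2 * (1 - 2 / (m:ℝ)^2)^2 - 1 := by
  obtain ⟨i, hi, rfl⟩ := Finset.mem_image.1 hw
  obtain ⟨j, hj, rfl⟩ := Finset.mem_image.1 hw'
  rw [Finset.mem_Icc] at hi hj
  have hm0 : (0:ℝ) < m := by
    have : (2:ℝ) ≤ m := by exact_mod_cast hm
    linarith
  have hij : i ≠ j := by
    rintro rfl; exact hne rfl
  have hiR : (1:ℝ) ≤ i ∧ (i:ℝ) ≤ m := ⟨by exact_mod_cast hi.1, by exact_mod_cast hi.2⟩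
  have hjR : (1:ℝ) ≤ j ∧ (j:ℝ) ≤ m := ⟨by exact_mod_cast hj.1, by exact_mod_cast hj.2⟩
  have habs1 : 1 ≤ |(i:ℝ) - j| := by
    rcases lt_or_gt_of_ne hij with h | h
    · have : (i:ℝ) + 1 ≤ j := by exact_mod_cast Nat.succ_le_of_lt h
      rw [abs_sub_comm, abs_of_nonneg (by linarith)]; linarith
    · have : (j:ℝ) + 1 ≤ i := by exact_mod_cast Nat.succ_le_of_lt h
      rw [abs_of_nonneg (by linarith)]; linarith
  have habs2 : |(i:ℝ) - j| ≤ (m:ℝ) - 1 := by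
    rw [abs_sub_le_iff]; constructor <;> linarith [hiR.1, hiR.2, hjR.1, hjR.2]
  rw [inner_circlePoint]
  have harg : 2*π*i/m - 2*π*j/m = 2 * π * ((i:ℝ) - j) / m := by ring
  rw [harg, ← Real.cos_abs]
  have hpi := Real.pi_pos
  have harg2 : |2 * π * ((i:ℝ) - j) / m| = 2 * π * |(i:ℝ) - j| / m := by
    rw [abs_div, abs_mul, abs_of_pos (by positivity : (0:ℝ) < 2*π), abs_of_pos hm0]
  rw [harg2]
  exact cos_angle_le m hm _ habs1 habs2

lemma phi_nonneg {α : ℝ} (hα : 0 < α) (a : ℝ) : 0 ≤ phi α a := by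
  unfold phi
  split_ifs with h
  · exact le_rfl
  · apply div_nonneg _ hα.le
    push_neg at h
    linarith

lemma phi_le_one {α : ℝ} (hα : 0 < α) {a : ℝ} (ha : a ≤ 1) : phi α a ≤ 1 := by
  unfold phi
  split_ifs with h
  · norm_num
  · rw [div_le_one hα]; linarith

lemma phi_eq_zero {α a : ℝ} (ha : a ≤ 1 - α) : phi α a = 0 := if_pos ha

lemma phi_one {α : ℝ} (hα : 0 < α) : phi α 1 = 1 := by
  unfold phi
  rw [if_neg (by linarith)]
  field_simp
  ring

lemma convexOn_phi {α : ℝ} (hα : 0 < α) : ConvexOn ℝ Set.univ (phi α) := by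
  have hrep : phi α = fun a => max ((a - 1 + α) / α) 0 := by
    funext a
    unfold phi
    split_ifs with h
    · rw [max_eq_right]
      apply div_nonpos_of_nonpos_of_nonneg _ hα.le
      linarith
    · rw [max_eq_left]
      apply div_nonneg _ hα.le
      push_neg at h
      linarith
  rw [hrep]
  have haff : ConvexOn ℝ Set.univ (fun a : ℝ => (a - 1 + α) / α) := by
    refine ⟨convex_univ, fun x _ y _ p q hp hq hpq => le_of_eq ?_⟩
    simp only [smul_eq_mul]
    field_simp
    nlinarith [hpq]
  exact haff.sup (convexOn_const 0 convex_univ)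

lemma convexOn_phi_inner {α : ℝ} (hα : 0 < α) (w : EuclideanSpace ℝ (Fin 2)) :
    ConvexOn ℝ Set.univ (fun x => phi α ⟪w, x⟫) := by
  refine ⟨convex_univ, fun x _ y _ p q hp hq hpq => ?_⟩
  have hin : ⟪w, p • x + q • y⟫ = p * ⟪w, x⟫ + q * ⟪w, y⟫ := by
    rw [inner_add_right, real_inner_smul_right, real_inner_smul_right]
  show phi α ⟪w, p • x + q • y⟫ ≤ p • phi α ⟪w, x⟫ + q • phi α ⟪w, y⟫
  rw [hin]
  simpa using (convexOn_phi hα).2 (Set.mem_univ ⟪w, x⟫) (Set.mem_univ ⟪w, y⟫) hp hq hpq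

/-- For `m ≥ 2`, `α = 2/m²` and `V ⊆ W_m`, the function
`f_V(x) = Σ_{w ∈ V} φ_α(⟨w, x⟩)` is convex on `ℝ²`, satisfies `0 ≤ f_V(x) ≤ 1` for all
`x` in the closed unit disk, and for every `w ∈ W_m`: `f_V(w) = 1` if `w ∈ V` and
`f_V(w) = 0` if `w ∉ V`. -/
theorem fV_convex_bounded_range (m : ℕ) (hm : 2 ≤ m)
    (V : Finset (EuclideanSpace ℝ (Fin 2))) (hV : V ⊆ Wm m) :
    ConvexOn ℝ Set.univ (fV m V) ∧
    (∀ x ∈ Metric.closedBall (0 : EuclideanSpace ℝ (Fin 2)) 1,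
      0 ≤ fV m V x ∧ fV m V x ≤ 1) ∧
    (∀ w ∈ Wm m, (w ∈ V → fV m V w = 1) ∧ (w ∉ V → fV m V w = 0)) := by
  have hmR : (2:ℝ) ≤ m := by exact_mod_cast hm
  have hm0 : (0:ℝ) < m := by linarith
  have hα : 0 < 2 / (m:ℝ)^2 := by positivity
  have hα2 : 2 / (m:ℝ)^2 ≤ 1/2 := by
    rw [div_le_div_iff₀ (by positivity) (by norm_num)]
    nlinarith
  refine ⟨?_, ?_, ?_⟩
  · -- convexity
    have key : ∀ (S : Finset (EuclideanSpace ℝ (Fin 2))),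
        ConvexOn ℝ Set.univ (fun x => ∑ w ∈ S, phi (2 / (m:ℝ)^2) ⟪w, x⟫) := by
      intro S
      induction S using Finset.induction_on with
      | empty => simpa using convexOn_const (0:ℝ) convex_univ
      | insert _ _ h ih =>
        simp only [Finset.sum_insert h]
        exact (convexOn_phi_inner hα _).add ih
    exact key V
  · intro x hx
    have hxn : ‖x‖ ≤ 1 := by rwa [Metric.mem_closedBall, dist_zero_right] at hx
    refine ⟨Finset.sum_nonneg fun w _ => phi_nonneg hα _, ?_⟩
    classical
    set T := V.filter (fun w => ¬ (⟪w, x⟫ ≤ 1 - 2 / (m:ℝ)^2)) with hT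
    have hsum : fV m V x = ∑ w ∈ T, phi (2 / (m:ℝ)^2) ⟪w, x⟫ := by
      rw [fV, hT]
      refine (Finset.sum_subset (Finset.filter_subset _ _) ?_).symm
      intro w hwV hwT
      apply phi_eq_zero
      by_contra hc
      exact hwT (Finset.mem_filter.2 ⟨hwV, hc⟩)
    have hcard : T.card ≤ 1 := by
      rw [Finset.card_le_one]
      intro a ha b hb
      by_contra hab
      rw [hT, Finset.mem_filter] at ha hb
      have ha2 : 1 - 2 / (m:ℝ)^2 < ⟪a, x⟫ := lt_of_not_ge ha.2
      have hb2 : 1 - 2 / (m:ℝ)^2 < ⟪b, x⟫ := lt_of_not_ge hb.2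
      have hna : ‖a‖ = 1 := norm_Wm (hV ha.1)
      have hnb : ‖b‖ = 1 := norm_Wm (hV hb.1)
      have hinab : ⟪a, b⟫ ≤ 2 * (1 - 2 / (m:ℝ)^2)^2 - 1 := inner_Wm_le hm (hV ha.1) (hV hb.1) hab
      have hsumin : ⟪a + b, x⟫ = ⟪a, x⟫ + ⟪b, x⟫ := inner_add_left a b x
      have hle : ⟪a + b, x⟫ ≤ ‖a + b‖ := by
        calc ⟪a + b, x⟫ ≤ ‖a + b‖ * ‖x‖ := real_inner_le_norm _ _
        _ ≤ ‖a + b‖ * 1 := by nlinarith [norm_nonneg (a + b)]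
        _ = ‖a + b‖ := mul_one _
      have hexp : ⟪a + b, a + b⟫ = ⟪a, a⟫ + 2 * ⟪a, b⟫ + ⟪b, b⟫ := real_inner_add_add_self a b
      have haa : ⟪a, a⟫ = (1:ℝ) := by rw [real_inner_self_eq_norm_sq, hna]; norm_num
      have hbb : ⟪b, b⟫ = (1:ℝ) := by rw [real_inner_self_eq_norm_sq, hnb]; norm_num
      have hnsq : ‖a + b‖^2 = 2 + 2 * ⟪a, b⟫ := by
        rw [← real_inner_self_eq_norm_sq, hexp, haa, hbb]; ring
      nlinarith [norm_nonneg (a + b), sq_nonneg (‖a + b‖ - (2 - 2 * (2 / (m:ℝ)^2)))]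
    have hterm : ∀ w ∈ T, phi (2 / (m:ℝ)^2) ⟪w, x⟫ ≤ 1 := by
      intro w hw
      apply phi_le_one hα
      calc ⟪w, x⟫ ≤ ‖w‖ * ‖x‖ := real_inner_le_norm _ _
      _ ≤ 1 := by rw [norm_Wm (hV (Finset.mem_filter.1 hw).1)]; linarith
    calc fV m V x = ∑ w ∈ T, phi (2 / (m:ℝ)^2) ⟪w, x⟫ := hsum
    _ ≤ T.card • (1:ℝ) := Finset.sum_le_card_nsmul T _ 1 hterm
    _ = T.card := by simp
    _ ≤ 1 := by exact_mod_cast hcard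
  · intro w hw
    have hoff : ∀ b ∈ Wm m, b ≠ w → phi (2 / (m:ℝ)^2) ⟪b, w⟫ = 0 := by
      intro b hb hbw
      apply phi_eq_zero
      have h1 := inner_Wm_le hm hb hw hbw
      nlinarith
    constructor
    · intro hwV
      rw [fV, Finset.sum_eq_single_of_mem w hwV]
      · have h1 : ⟪w, w⟫ = (1:ℝ) := by rw [real_inner_self_eq_norm_sq, norm_Wm hw]; norm_num
        rw [h1]
        exact phi_one hα
      · intro b hb hbw
        exact hoff b (hV hb) hbw
    · intro hwV
      rw [fV]
      apply Finset.sum_eq_zero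
      intro b hb
      exact hoff b (hV hb) (fun h => hwV (h ▸ hb))
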